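/- arXiv:2504.10427 — 10 statements merged into one kernel-verified Lean document; each statement's English description precedes it below -/
import Mathlib

section
/- If T is a bounded quasinormal operator on a complex Hilbert space H (i.e., T(T*T) = (T*T)T) and the kernel of T* is contained in the kernel of T, then T is normal. -/
/-!
Put `C = T*T - TT*`. Since `ker T* ⊆ ker T`, the self-adjoint operator `C` vanishes on `ker T*`;
quasinormality gives `T* C T = 0`, so `range (C T) ⊆ ker T* ⊆ ker C`. Hence
`(CT)*(CT) = T* C² T = 0`, i.e. `CT = 0`. An operator vanishing on `range T` and on
`ker T* = (range T)ᗮ` is zero, so `C = 0`.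
-/

open ContinuousLinearMap

def IsQuasinormal {R : Type*} [Mul R] [Star R] (a : R) : Prop :=
  Commute a (star a * a)

namespace IsQuasinormal

variable {R : Type*} [Ring R] [StarRing R] {a : R}

theorem star_commute (ha : IsQuasinormal a) : Commute (star a) (star a * a) := by
  simpa using ha.star_star

theorem star_mul_commutator_mul_eq_zero (ha : IsQuasinormal a) :
    star a * (star a * a - a * star a) * a = 0 := by
  calc star a * (star a * a - a * star a) * a
      = (star a * (star a * a) - star a * a * star a) * a := by noncomm_ring
    _ = 0 := by rw [ha.star_commute.eq, sub_self, zero_mul]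

end IsQuasinormal

theorem IsSelfAdjoint.mul_eq_zero_of_mul_self_mul_eq_zero {A : Type*} [NonUnitalNormedRing A]
    [StarRing A] [CStarRing A] {c s : A} (hc : IsSelfAdjoint c) (h : c * (c * s) = 0) :
    c * s = 0 := by
  rw [← CStarRing.star_mul_self_eq_zero_iff, star_mul, hc.star_eq, mul_assoc, h, mul_zero]

namespace ContinuousLinearMap

variable {𝕜 E F G : Type*} [RCLike 𝕜] [NormedAddCommGroup E] [InnerProductSpace 𝕜 E]
  [NormedAddCommGroup F] [InnerProductSpace 𝕜 F] [NormedAddCommGroup G] [InnerProductSpace 𝕜 G]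
  [CompleteSpace E] [CompleteSpace F] [CompleteSpace G]

theorem eq_zero_of_comp_eq_zero_of_ker_adjoint_le {S : F →L[𝕜] G} {T : E →L[𝕜] F}
    (hST : S ∘L T = 0) (hker : (adjoint T).ker ≤ S.ker) : S = 0 := by
  -- `T* S* = (S T)* = 0`, so `range S* ⊆ ker T* ⊆ ker S`.
  have hSS : S ∘L adjoint S = 0 := by
    ext x
    apply hker
    simpa [adjoint_comp] using congr($(congrArg adjoint hST) x)
  have hS : adjoint S = 0 := by
    ext x
    have hx : x ∈ (S ∘L adjoint S).ker := by simp [hSS]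
    rw [ker_self_comp_adjoint] at hx
    exact hx
  simpa using congrArg adjoint hS

end ContinuousLinearMap

theorem stmt_0 {H : Type*} [NormedAddCommGroup H] [InnerProductSpace ℂ H] [CompleteSpace H]
    (T : H →L[ℂ] H)
    (hq : T * (ContinuousLinearMap.adjoint T * T) = (ContinuousLinearMap.adjoint T * T) * T)
    (hker : LinearMap.ker ((ContinuousLinearMap.adjoint T : H →L[ℂ] H) : H →ₗ[ℂ] H) ≤ LinearMap.ker (T : H →ₗ[ℂ] H)) :
    ContinuousLinearMap.adjoint T * T = T * ContinuousLinearMap.adjoint T := by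
  have hT : IsQuasinormal T := hq
  set C := star T * T - T * star T with hC
  have hC_sa : IsSelfAdjoint C :=
    (IsSelfAdjoint.star_mul_self T).sub (IsSelfAdjoint.mul_star_self T)
  have hC_ker : (adjoint T).ker ≤ C.ker := fun x hx ↦ by
    have hTx : T x = 0 := hker hx
    rw [LinearMap.mem_ker] at hx ⊢
    simp [hC, star_eq_adjoint, hx, hTx]
  have hCCT : C * (C * T) = 0 := by
    ext x
    apply hC_ker
    exact congr($(hT.star_mul_commutator_mul_eq_zero) x)
  have hC0 : C = 0 :=
    eq_zero_of_comp_eq_zero_of_ker_adjoint_le (hC_sa.mul_eq_zero_of_mul_self_mul_eq_zero hCCT) hC_ker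
  exact sub_eq_zero.mp hC0
end

section
/- If T is a bounded quasinormal operator on a complex Hilbert space and T^n is normal for some natural number n ≥ 1, then T is normal. -/
/-- A selfadjoint nilpotent element of a C*-ring is zero. -/
lemma selfAdjoint_nilpotent_eq_zero {E : Type*} [NormedRing E] [StarRing E] [CStarRing E]
    (p : E) (hp : IsSelfAdjoint p) : ∀ k : ℕ, p ^ (k + 1) = 0 → p = 0 := by
  intro k
  induction k with
  | zero => intro h; simpa using h
  | succ m ih =>
    intro h
    apply ih
    have hsa : IsSelfAdjoint (p ^ (m + 1)) := hp.pow (m + 1)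
    have hsq : p ^ (m + 1) * p ^ (m + 1) = 0 := by
      have : p ^ (m + 1) * p ^ (m + 1) = p ^ (m + 2) * p ^ m := by
        rw [← pow_add, ← pow_add]; ring_nf
      rw [this, h, zero_mul]
    have hnorm : ‖p ^ (m + 1)‖ * ‖p ^ (m + 1)‖ = 0 := by
      rw [← CStarRing.norm_star_mul_self, hsa.star_eq, hsq, norm_zero]
    have : ‖p ^ (m + 1)‖ = 0 := by nlinarith [norm_nonneg (p ^ (m + 1))]
    exact norm_eq_zero.mp this

theorem stmt_1 {H : Type*} [NormedAddCommGroup H] [InnerProductSpace ℂ H] [CompleteSpace H]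
    (T : H →L[ℂ] H)
    (hq : T * (ContinuousLinearMap.adjoint T * T) = (ContinuousLinearMap.adjoint T * T) * T)
    (n : ℕ) (hn : 1 ≤ n)
    (hnorm : ContinuousLinearMap.adjoint (T ^ n) * T ^ n = T ^ n * ContinuousLinearMap.adjoint (T ^ n)) :
    ContinuousLinearMap.adjoint T * T = T * ContinuousLinearMap.adjoint T := by
  rw [← ContinuousLinearMap.star_eq_adjoint] at *
  set a : H →L[ℂ] H := star T * T with ha
  set b : H →L[ℂ] H := T * star T with hb
  -- a is selfadjoint, b is selfadjoint
  have hsa : star a = a := by simp [ha, star_mul]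
  have hsb : star b = b := by simp [hb, star_mul]
  -- quasinormality: T * a = a * T
  have hq' : T * a = a * T := hq
  -- star version: a * star T = star T * a
  have hq's : a * star T = star T * a := by
    have := congrArg star hq
    simpa [star_mul, hsa] using this
  set c : H →L[ℂ] H := a - b with hc
  have hsc : star c = c := by simp [hc, star_sub, hsa, hsb]
  -- c * T = 0   (since b * T = T * star T * T = T * a = a * T)
  have hcT : c * T = 0 := by
    have hbT : b * T = a * T := by
      rw [hb, mul_assoc, ← ha, hq']
    rw [hc, sub_mul, hbT, sub_self]
  -- b * b = a * b, hence c * b = 0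
  have hbb : b * b = a * b := by
    calc b * b = T * (star T * T) * star T := by rw [hb]; noncomm_ring
    _ = (a * T) * star T := by rw [← ha, hq']
    _ = a * b := by rw [hb]; noncomm_ring
  have hcb : c * b = 0 := by rw [hc, sub_mul, hbb, sub_self]
  -- a and b commute
  have hab : a * b = b * a := by
    have : star (a * b) = a * b := by rw [← hbb]; rw [star_mul, hsb]
    calc a * b = star (a * b) := this.symm
    _ = b * a := by rw [star_mul, hsa, hsb]
  -- c and a commute
  have hca : c * a = a * c := by
    rw [hc, sub_mul, mul_sub, hab]
  -- (star T)^k * T^k = a^k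
  have hTa : Commute T a := hq'
  have hpow : ∀ k : ℕ, (star T) ^ k * T ^ k = a ^ k := by
    intro k
    induction k with
    | zero => simp
    | succ m ih =>
      have hTm : a * T ^ m = T ^ m * a := ((hTa.symm).pow_right m).eq
      calc (star T) ^ (m + 1) * T ^ (m + 1)
          = (star T) ^ m * (star T * T) * T ^ m := by
            rw [pow_succ, pow_succ']; noncomm_ring
        _ = (star T) ^ m * (a * T ^ m) := by rw [← ha]; noncomm_ring
        _ = (star T) ^ m * T ^ m * a := by rw [hTm]; noncomm_ring
        _ = a ^ (m + 1) := by rw [ih, pow_succ]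
  -- from normality of T^n : a^n = T^n * (star T)^n
  have hnorm' : a ^ n = T ^ n * (star T) ^ n := by
    rw [← hpow n, ← star_pow]
    exact hnorm
  -- c * a^n = 0
  obtain ⟨m, rfl⟩ : ∃ m, n = m + 1 := ⟨n - 1, by omega⟩
  have hcTn : c * T ^ (m + 1) = 0 := by
    rw [pow_succ', ← mul_assoc, hcT, zero_mul]
  have hcan : c * a ^ (m + 1) = 0 := by
    rw [hnorm', ← mul_assoc, hcTn, zero_mul]
  -- (c * a)^n = 0
  have hcomm : Commute c a := hca
  have hcan' : (c * a) ^ (m + 1) = 0 := by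
    rw [hcomm.mul_pow]
    calc c ^ (m + 1) * a ^ (m + 1) = c ^ m * (c * a ^ (m + 1)) := by
          rw [pow_succ, mul_assoc]
    _ = 0 := by rw [hcan, mul_zero]
  -- c * a is selfadjoint
  have hsca : IsSelfAdjoint (c * a) := by
    have : star (c * a) = a * c := by rw [star_mul, hsa, hsc]
    rw [IsSelfAdjoint, this, hca]
  -- hence c * a = 0
  have hca0 : c * a = 0 := selfAdjoint_nilpotent_eq_zero (c * a) hsca m hcan'
  -- c^2 = c * a - c * b = 0
  have hcc : c * c = 0 := by
    calc c * c = c * a - c * b := by rw [hc]; noncomm_ring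
    _ = 0 := by rw [hca0, hcb, sub_self]
  have hc0 : c = 0 := by
    apply selfAdjoint_nilpotent_eq_zero c hsc 1
    rw [pow_two]; exact hcc
  have : a = b := by rwa [hc, sub_eq_zero] at hc0
  exact this
end

section
/- If T is a bounded quasinormal operator on a Hilbert space, then (T*)^k T^k = (T*T)^k for every natural number k. -/
theorem stmt_2 {H : Type*} [NormedAddCommGroup H] [InnerProductSpace ℂ H] [CompleteSpace H]
    (T : H →L[ℂ] H)
    (hq : T * (ContinuousLinearMap.adjoint T * T) = (ContinuousLinearMap.adjoint T * T) * T)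
    (k : ℕ) :
    (ContinuousLinearMap.adjoint T) ^ k * T ^ k = (ContinuousLinearMap.adjoint T * T) ^ k := by
  set A := ContinuousLinearMap.adjoint T with hA
  induction k with
  | zero => simp
  | succ n ih =>
    have hc0 : Commute T (A * T) := hq
    have hc : Commute (A * T) (T ^ n) := hc0.symm.pow_right n
    calc A ^ (n + 1) * T ^ (n + 1) = A ^ n * (A * T * T ^ n) := by
          rw [pow_succ, pow_succ']; noncomm_ring
      _ = A ^ n * (T ^ n * (A * T)) := by rw [hc.eq]
      _ = (A ^ n * T ^ n) * (A * T) := by noncomm_ring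
      _ = (A * T) ^ n * (A * T) := by rw [ih]
      _ = (A * T) ^ (n + 1) := by rw [pow_succ]
end

section
/- A bounded operator T on a complex Hilbert space is k-paranormal if and only if for every real λ > 0 the operator T*^{k+1}T^{k+1} − (k+1)λ^k T*T + kλ^{k+1} I is positive. -/
/-!
Put `A = ‖T x‖²`, `B = ‖T^{k+1} x‖²`, `C = ‖x‖²`, so that k-paranormality at `x` reads
`A^{k+1} ≤ B C^k` and the quadratic form at `x` is `B - (k+1) λ^k A + k λ^{k+1} C`.
By the AM-GM inequality `(k+1) u v^k ≤ u^{k+1} + k v^{k+1}` (with `u = A`, `v = λ C`), for `C > 0`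
the infimum over `λ > 0` of `k λ^{k+1} C - (k+1) λ^k A` is `-A^{k+1} / C^k`, attained at `λ = A / C`;
so the form is nonnegative for all `λ > 0` exactly when `A^{k+1} ≤ B C^k`.
When `C = 0`, both conditions say `A = 0`, using `k ≥ 1`.
-/

open ContinuousLinearMap Filter

theorem add_one_mul_mul_pow_le_pow_succ_add (k : ℕ) {u v : ℝ} (hu : 0 ≤ u) (hv : 0 < v) :
    (k + 1) * u * v ^ k ≤ u ^ (k + 1) + k * v ^ (k + 1) := by
  -- Bernoulli's inequality for `t = u / v`, multiplied by `v^{k+1}`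
  have h := one_add_mul_sub_le_pow (a := u / v) (by linarith [div_nonneg hu hv.le]) (k + 1)
  rw [div_pow, le_div_iff₀ (by positivity)] at h
  have e : (1 + ((k + 1 : ℕ) : ℝ) * (u / v - 1)) * v ^ (k + 1)
      = (k + 1) * u * v ^ k - k * v ^ (k + 1) := by
    field_simp; push_cast; ring
  linarith

theorem pow_mul_sub_add_eq (k : ℕ) (A B C lam : ℝ) :
    C ^ k * (B - (k + 1) * lam ^ k * A + k * lam ^ (k + 1) * C)
      = B * C ^ k - ((k + 1) * A * (lam * C) ^ k - k * (lam * C) ^ (k + 1)) := by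
  ring

theorem eq_zero_of_forall_pos_mul_pow_le {k : ℕ} (hk : k ≠ 0) {A B : ℝ} (hA : 0 ≤ A)
    (h : ∀ lam : ℝ, 0 < lam → (k + 1) * lam ^ k * A ≤ B) : A = 0 := by
  by_contra hA0
  have hA' : 0 < (k + 1) * A := by positivity
  obtain ⟨lam, hB, hlam⟩ :=
    ((((tendsto_pow_atTop hk).const_mul_atTop hA').eventually_gt_atTop B).and
      (eventually_gt_atTop 0)).exists
  linarith [h lam hlam, show (k + 1) * A * lam ^ k = (k + 1) * lam ^ k * A by ring]

section ScalarCriterion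

variable {k : ℕ} {A B C : ℝ}

theorem nonneg_sub_add_of_pow_succ_le_mul_pow (hk : k ≠ 0) (hA : 0 ≤ A) (hB : 0 ≤ B) (hC : 0 ≤ C)
    (h : A ^ (k + 1) ≤ B * C ^ k) {lam : ℝ} (hlam : 0 < lam) :
    0 ≤ B - (k + 1) * lam ^ k * A + k * lam ^ (k + 1) * C := by
  rcases hC.eq_or_lt with rfl | hC
  · have hA0 : A = 0 := by
      rw [zero_pow hk, mul_zero] at h
      exact pow_eq_zero_iff (Nat.succ_ne_zero k) |>.mp (le_antisymm h (by positivity))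
    simp [hA0, hB]
  · refine (mul_nonneg_iff_of_pos_left (pow_pos hC k)).mp ?_
    rw [pow_mul_sub_add_eq]
    linarith [add_one_mul_mul_pow_le_pow_succ_add k hA (mul_pos hlam hC)]

theorem pow_succ_le_mul_pow_of_forall_nonneg (hk : k ≠ 0) (hA : 0 ≤ A) (hB : 0 ≤ B) (hC : 0 ≤ C)
    (h : ∀ lam : ℝ, 0 < lam → 0 ≤ B - (k + 1) * lam ^ k * A + k * lam ^ (k + 1) * C) :
    A ^ (k + 1) ≤ B * C ^ k := by
  rcases hC.eq_or_lt with rfl | hC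
  · have hA0 : A = 0 := eq_zero_of_forall_pos_mul_pow_le hk hA fun lam hlam => by
      simpa using h lam hlam
    simp [hA0, zero_pow hk]
  rcases hA.eq_or_lt with rfl | hA
  · rw [zero_pow (Nat.succ_ne_zero k)]
    positivity
  -- the minimiser `λ = A / C`, where `λ C = A`
  have hmin := (mul_nonneg_iff_of_pos_left (pow_pos hC k)).mpr (h (A / C) (div_pos hA hC))
  rw [pow_mul_sub_add_eq, div_mul_cancel₀ A hC.ne'] at hmin
  linarith [show (k + 1) * A * A ^ k - k * A ^ (k + 1) = A ^ (k + 1) by ring]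

theorem pow_succ_le_mul_pow_iff_forall_nonneg (hk : k ≠ 0) (hA : 0 ≤ A) (hB : 0 ≤ B)
    (hC : 0 ≤ C) :
    A ^ (k + 1) ≤ B * C ^ k ↔
      ∀ lam : ℝ, 0 < lam → 0 ≤ B - (k + 1) * lam ^ k * A + k * lam ^ (k + 1) * C :=
  ⟨fun h _ hlam => nonneg_sub_add_of_pow_succ_le_mul_pow hk hA hB hC h hlam,
    pow_succ_le_mul_pow_of_forall_nonneg hk hA hB hC⟩

end ScalarCriterion

theorem pow_succ_le_mul_pow_iff_sq {k : ℕ} {a b c : ℝ} (ha : 0 ≤ a) (hb : 0 ≤ b) (hc : 0 ≤ c) :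
    a ^ (k + 1) ≤ b * c ^ k ↔ (a ^ 2) ^ (k + 1) ≤ b ^ 2 * (c ^ 2) ^ k := by
  rw [← pow_le_pow_iff_left₀ (by positivity) (by positivity) two_ne_zero, mul_pow,
    pow_right_comm a, pow_right_comm c]

theorem re_inner_adjoint_pow_mul_pow_sub_add_apply {H : Type*} [NormedAddCommGroup H]
    [InnerProductSpace ℂ H] [CompleteSpace H] (T : H →L[ℂ] H) (n : ℕ) (α β : ℝ) (x : H) :
    (inner ℂ (((adjoint T) ^ n * T ^ n - (α : ℂ) • (adjoint T * T)
        + (β : ℂ) • (1 : H →L[ℂ] H)) x) x).re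
      = ‖(T ^ n) x‖ ^ 2 - α * ‖T x‖ ^ 2 + β * ‖x‖ ^ 2 := by
  have hpow : adjoint T ^ n = adjoint (T ^ n) := by simp only [← star_eq_adjoint, star_pow]
  rw [hpow, apply_norm_sq_eq_inner_adjoint_left, apply_norm_sq_eq_inner_adjoint_left,
    ← inner_self_eq_norm_sq (𝕜 := ℂ) x]
  simp [mul_def]

theorem stmt_6 {H : Type*} [NormedAddCommGroup H] [InnerProductSpace ℂ H] [CompleteSpace H]
    (T : H →L[ℂ] H) (k : ℕ) (hk : 1 ≤ k) :
    (∀ x : H, ‖T x‖ ^ (k + 1) ≤ ‖(T ^ (k + 1)) x‖ * ‖x‖ ^ k) ↔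
      (∀ lam : ℝ, 0 < lam → ∀ x : H,
        0 ≤ (inner ℂ ((((ContinuousLinearMap.adjoint T) ^ (k + 1) * T ^ (k + 1)
              - (((k + 1 : ℝ) * lam ^ k : ℝ) : ℂ) • (ContinuousLinearMap.adjoint T * T)
              + (((k : ℝ) * lam ^ (k + 1) : ℝ) : ℂ) • (1 : H →L[ℂ] H))) x) x : ℂ).re) := by
  have hk0 : k ≠ 0 := Nat.one_le_iff_ne_zero.mp hk
  have pointwise (x : H) := (pow_succ_le_mul_pow_iff_sq (norm_nonneg (T x))
    (norm_nonneg ((T ^ (k + 1)) x)) (norm_nonneg x)).trans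
    (pow_succ_le_mul_pow_iff_forall_nonneg hk0 (sq_nonneg _) (sq_nonneg _) (sq_nonneg _))
  simp only [re_inner_adjoint_pow_mul_pow_sub_add_apply]
  exact ⟨fun h lam hlam x => (pointwise x).mp (h x) lam hlam,
    fun h x => (pointwise x).mpr fun lam hlam => h lam hlam x⟩
end

section
/- If T is a k-paranormal operator for some k ≥ 1 and T^n = λI for some natural number n ≥ 1 and some complex number λ, then T is normal. -/
/-!
If `λ = 0`, then `T` is nilpotent; but `T x ≠ 0` forces `T ^ (m * k + 1) x ≠ 0` for every `m` by
`k`-paranormality, so `T = 0`. If `λ ≠ 0`, fix `x ≠ 0` and put `b j = log ‖T ^ j x‖`.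
Paranormality at `T ^ j x` says that the increments `d j = b (j + 1) - b j` satisfy
`k * d j ≤ d (j + 1) + ⋯ + d (j + k)`, and `T ^ n = λ • 1` makes `d` periodic. At a maximum of `d`
this forces the next increment to be maximal as well, so `d` is constant and
`‖T x‖ = |λ| ^ (1 / n) * ‖x‖`. Hence `T* T` is a scalar, and as `T` is invertible, so is `T T*`.
-/

open Finset

theorem Function.Periodic.eq_of_mul_le_sum_range {d : ℕ → ℝ} {n k : ℕ} (hd : Function.Periodic d n)
    (hn : 0 < n) (hk : 1 ≤ k) (hle : ∀ j, k * d j ≤ ∑ i ∈ range k, d (j + 1 + i)) (i j : ℕ) :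
    d i = d j := by
  obtain ⟨m, -, hmax⟩ := (range n).exists_max_image d ⟨0, mem_range.mpr hn⟩
  have hle_max : ∀ j, d j ≤ d m := fun j =>
    hd.map_mod_nat j ▸ hmax _ (mem_range.mpr (Nat.mod_lt j hn))
  have hstep : ∀ p, d p = d m → d (p + 1) = d m := by
    intro p hp
    obtain ⟨k, rfl⟩ := Nat.exists_eq_add_of_le' hk
    have htail : ∑ i ∈ range k, d (p + 1 + (i + 1)) ≤ k * d m := by
      simpa using sum_le_sum fun i (_ : i ∈ range k) => hle_max (p + 1 + (i + 1))
    have := hle p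
    rw [sum_range_succ', hp] at this
    push_cast at this
    linarith [hle_max (p + 1)]
  have hfrom_max : ∀ j, d (m + j) = d m := by
    intro j
    induction j with
    | zero => rfl
    | succ j ih => exact hstep (m + j) ih
  have hconst : ∀ j, d j = d m := by
    intro j
    have hm : m ≤ j + m * n := le_add_left (Nat.le_mul_of_pos_right m hn)
    have hper := hd.nat_mul m j
    rw [Nat.cast_id] at hper
    rw [← hper, ← Nat.add_sub_cancel' hm, hfrom_max]
  rw [hconst i, hconst j]

theorem mul_sub_eq_of_add_le_of_add_periodic {b : ℕ → ℝ} {n k : ℕ} {L : ℝ} (hn : 0 < n)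
    (hk : 1 ≤ k) (hb : ∀ j, b (j + n) = b j + L)
    (hle : ∀ j, (k + 1) * b (j + 1) ≤ b (j + 1 + k) + k * b j) :
    n * (b 1 - b 0) = L := by
  set d : ℕ → ℝ := fun j => b (j + 1) - b j
  have hd : Function.Periodic d n := fun j => by
    simp only [d, add_right_comm j n 1, hb]
    ring
  have hd_le : ∀ j, k * d j ≤ ∑ i ∈ range k, d (j + 1 + i) := fun j => by
    have htel : ∑ i ∈ range k, d (j + 1 + i) = b (j + 1 + k) - b (j + 1) :=
      sum_range_sub (fun i => b (j + 1 + i)) k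
    rw [htel]
    linarith [hle j]
  calc n * (b 1 - b 0) = ∑ i ∈ range n, d i := by
        rw [sum_congr rfl fun i _ => hd.eq_of_mul_le_sum_range hn hk hd_le i 0]
        simp [d, mul_sub]
    _ = b (0 + n) - b 0 := by rw [zero_add]; exact sum_range_sub b n
    _ = L := by rw [hb 0]; ring

section Paranormal

variable {𝕜 E : Type*} [NontriviallyNormedField 𝕜] [NormedAddCommGroup E] [NormedSpace 𝕜 E]

def IsKParanormal (k : ℕ) (T : E →L[𝕜] E) : Prop :=
  ∀ x, ‖T x‖ ^ (k + 1) ≤ ‖(T ^ (k + 1)) x‖ * ‖x‖ ^ k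

theorem ContinuousLinearMap.injective_of_pow_eq_smul_one {T : E →L[𝕜] E} {n : ℕ} {lam : 𝕜}
    (hn : 0 < n) (hlam : lam ≠ 0) (hTn : T ^ n = lam • 1) : Function.Injective T := by
  have hinj : Function.Injective (T ^ n) := by
    rw [hTn]
    exact smul_right_injective E hlam
  rw [FunLike.coe_pow_eq_iterate, ← Nat.sub_add_cancel hn, Function.iterate_succ] at hinj
  exact hinj.of_comp

namespace IsKParanormal

variable {k : ℕ} {T : E →L[𝕜] E}

theorem norm_pow_succ_apply_le (hT : IsKParanormal k T) (x : E) (j : ℕ) :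
    ‖(T ^ (j + 1)) x‖ ^ (k + 1) ≤ ‖(T ^ (j + 1 + k)) x‖ * ‖(T ^ j) x‖ ^ k := by
  rw [show j + 1 + k = k + 1 + j by ring, pow_add T (k + 1) j, mul_apply_eq_comp, pow_succ' T j,
    mul_apply_eq_comp]
  exact hT _

theorem pow_apply_ne_zero (hT : IsKParanormal k T) {x : E} (hx : T x ≠ 0) (m : ℕ) :
    (T ^ (m * k + 1)) x ≠ 0 := by
  induction m with
  | zero => simpa using hx
  | succ m ih =>
    intro h0
    have h := hT.norm_pow_succ_apply_le x (m * k)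
    rw [show m * k + 1 + k = (m + 1) * k + 1 by ring, h0, norm_zero, zero_mul] at h
    exact (pow_pos (norm_pos_iff.mpr ih) (k + 1)).not_ge h

theorem eq_zero_of_pow_eq_zero (hT : IsKParanormal k T) (hk : 1 ≤ k) {n : ℕ} (hTn : T ^ n = 0) :
    T = 0 := by
  ext x
  by_contra hx
  apply hT.pow_apply_ne_zero hx n
  have hn : n ≤ n * k + 1 := le_add_right (Nat.le_mul_of_pos_right n hk)
  rw [← Nat.sub_add_cancel hn, pow_add, hTn, mul_zero, zero_apply]

theorem norm_apply_pow_eq (hT : IsKParanormal k T) (hk : 1 ≤ k) {n : ℕ} (hn : 0 < n) {lam : 𝕜}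
    (hlam : lam ≠ 0) (hTn : T ^ n = lam • 1) (x : E) : ‖T x‖ ^ n = ‖lam‖ * ‖x‖ ^ n := by
  rcases eq_or_ne x 0 with rfl | hx
  · simp [hn.ne']
  have hinj := ContinuousLinearMap.injective_of_pow_eq_smul_one hn hlam hTn
  have horbit : ∀ j, 0 < ‖(T ^ j) x‖ := fun j => by
    rw [norm_pos_iff, FunLike.coe_pow_eq_iterate]
    exact fun h => hx (hinj.iterate j (h.trans (iterate_map_zero T j).symm))
  set b : ℕ → ℝ := fun j => Real.log ‖(T ^ j) x‖
  have hb : ∀ j, b (j + n) = b j + Real.log ‖lam‖ := fun j => by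
    simp only [b, pow_add, hTn, mul_smul_comm, mul_one, smul_apply, norm_smul]
    rw [Real.log_mul (norm_ne_zero_iff.mpr hlam) (horbit j).ne', add_comm]
  have hle : ∀ j, (k + 1) * b (j + 1) ≤ b (j + 1 + k) + k * b j := fun j => by
    have h := Real.log_le_log (pow_pos (horbit _) _) (hT.norm_pow_succ_apply_le x j)
    rw [Real.log_pow, Real.log_mul (horbit _).ne' (pow_pos (horbit j) k).ne', Real.log_pow] at h
    exact_mod_cast h
  have hlog := mul_sub_eq_of_add_le_of_add_periodic hn hk hb hle
  simp only [b, pow_one, pow_zero, one_apply_eq_self] at hlog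
  have h1 : 0 < ‖T x‖ := by simpa using horbit 1
  have h0 : 0 < ‖x‖ := norm_pos_iff.mpr hx
  apply Real.log_injOn_pos (pow_pos h1 n) (mul_pos (norm_pos_iff.mpr hlam) (pow_pos h0 n))
  rw [Real.log_pow, Real.log_mul (norm_ne_zero_iff.mpr hlam) (pow_pos h0 n).ne', Real.log_pow]
  linarith

theorem norm_apply_eq_rpow_mul (hT : IsKParanormal k T) (hk : 1 ≤ k) {n : ℕ} (hn : 0 < n)
    {lam : 𝕜} (hlam : lam ≠ 0) (hTn : T ^ n = lam • 1) (x : E) :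
    ‖T x‖ = ‖lam‖ ^ (n⁻¹ : ℝ) * ‖x‖ := by
  refine (pow_left_inj₀ (norm_nonneg _) (by positivity) hn.ne').mp ?_
  rw [mul_pow, Real.rpow_inv_natCast_pow (norm_nonneg _) hn.ne',
    hT.norm_apply_pow_eq hk hn hlam hTn]

end IsKParanormal

end Paranormal

theorem ContinuousLinearMap.adjoint_comp_self_eq_of_norm_apply_eq {𝕜 E F : Type*} [RCLike 𝕜]
    [NormedAddCommGroup E] [InnerProductSpace 𝕜 E] [CompleteSpace E]
    [NormedAddCommGroup F] [InnerProductSpace 𝕜 F] [CompleteSpace F]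
    {T : E →L[𝕜] F} {c : ℝ} (h : ∀ x, ‖T x‖ = c * ‖x‖) :
    adjoint T ∘L T = ((c ^ 2 : ℝ) : 𝕜) • 1 := by
  rw [← sub_eq_zero]
  have hsymm : ((adjoint T ∘L T - ((c ^ 2 : ℝ) : 𝕜) • 1 : E →L[𝕜] E) : E →ₗ[𝕜] E).IsSymmetric :=
    T.isPositive_adjoint_comp_self.isSymmetric.sub
      (LinearMap.IsSymmetric.id.smul (RCLike.conj_ofReal _))
  refine ContinuousLinearMap.coe_injective (hsymm.inner_map_self_eq_zero.mp fun x => ?_)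
  simp [inner_sub_left, adjoint_inner_left, inner_smul_left, inner_self_eq_norm_sq_to_K, h, mul_pow]

theorem IsUnit.commute_of_mul_eq_smul_one {R S : Type*} [Monoid R] [SMul S R]
    [IsScalarTower S R R] [SMulCommClass S R R] {a b : R} {μ : S} (ha : IsUnit a)
    (h : b * a = μ • 1) : Commute b a := by
  obtain ⟨u, rfl⟩ := ha
  have hb : b = μ • ↑u⁻¹ := by
    rw [← mul_one b, ← u.mul_inv, ← mul_assoc, h, smul_mul_assoc, one_mul]
  rw [Commute, SemiconjBy, h, hb, mul_smul_comm, u.mul_inv]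

theorem stmt_7 {H : Type*} [NormedAddCommGroup H] [InnerProductSpace ℂ H] [CompleteSpace H]
    (T : H →L[ℂ] H) (k : ℕ) (hk : 1 ≤ k)
    (hpara : ∀ x : H, ‖T x‖ ^ (k + 1) ≤ ‖(T ^ (k + 1)) x‖ * ‖x‖ ^ k)
    (n : ℕ) (hn : 1 ≤ n) (lam : ℂ) (hT : T ^ n = lam • (1 : H →L[ℂ] H)) :
    ContinuousLinearMap.adjoint T * T = T * ContinuousLinearMap.adjoint T := by
  have hT_para : IsKParanormal k T := hpara
  rcases eq_or_ne lam 0 with rfl | hlam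
  · rw [hT_para.eq_zero_of_pow_eq_zero hk (by rwa [zero_smul] at hT)]
    simp
  have hunit : IsUnit T := by
    rw [← isUnit_pow_iff (by omega : n ≠ 0), hT, ← Algebra.algebraMap_eq_smul_one]
    exact (IsUnit.mk0 lam hlam).map _
  exact hunit.commute_of_mul_eq_smul_one <|
    ContinuousLinearMap.adjoint_comp_self_eq_of_norm_apply_eq
      (hT_para.norm_apply_eq_rpow_mul hk hn hlam hT)
end

section
/- If T is an absolute-k-paranormal operator for some k ≥ 1 and T^n = λI for some natural number n ≥ 1 and some complex number λ, then T is normal. -/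
/-!
Because `R = |T|` satisfies `‖R y‖ = ‖T y‖` and `‖R‖ = ‖T‖`, absolute-`k`-paranormality yields
`‖T x‖ ^ (k + 1) ≤ ‖T‖ ^ (k - 1) * ‖T (T x)‖ * ‖x‖ ^ k`. Applied to `T ^ m x` this gives, by
induction, that `T` is normaloid: `‖T ^ m‖ = ‖T‖ ^ m`. If `T ^ n = λ`, then `‖T‖ ^ n ≤ |λ|`, and
`|λ| ‖x‖ = ‖T ^ (n - 1) (T x)‖ ≤ ‖T‖ ^ (n - 1) ‖T x‖` forces `‖T x‖ = ‖T‖ ‖x‖`, i.e.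
`T* T = ‖T‖²`. For `λ ≠ 0` the operator `T` is invertible, so also `T T* = ‖T‖²`; for `λ = 0`
normaloidity forces `T = 0`.
-/

namespace ContinuousLinearMap

section Normed

variable {𝕜 E F : Type*} [NontriviallyNormedField 𝕜] [SeminormedAddCommGroup E]
  [SeminormedAddCommGroup F] [NormedSpace 𝕜 E] [NormedSpace 𝕜 F]

theorem opNorm_pow_le_of_forall_norm_apply_pow_le (T : E →L[𝕜] F) {M : ℝ} {p : ℕ} (hp : p ≠ 0)
    (hM : 0 ≤ M) (h : ∀ x, ‖T x‖ ^ p ≤ M * ‖x‖ ^ p) : ‖T‖ ^ p ≤ M := by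
  have hroot : ‖T‖ ≤ M ^ (p : ℝ)⁻¹ := by
    refine opNorm_le_bound _ (by positivity) fun x => ?_
    refine (pow_le_pow_iff_left₀ (norm_nonneg _) (by positivity) hp).mp ?_
    rw [mul_pow, Real.rpow_inv_natCast_pow hM hp]
    exact h x
  calc ‖T‖ ^ p ≤ (M ^ (p : ℝ)⁻¹) ^ p := by gcongr
    _ = M := Real.rpow_inv_natCast_pow hM hp

theorem norm_pow_apply_le (T : E →L[𝕜] E) (m : ℕ) (x : E) : ‖(T ^ m) x‖ ≤ ‖T‖ ^ m * ‖x‖ := by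
  induction m with
  | zero => simp
  | succ m ih =>
    calc ‖(T ^ (m + 1)) x‖ = ‖T ((T ^ m) x)‖ := by rw [pow_succ']; rfl
      _ ≤ ‖T‖ * (‖T‖ ^ m * ‖x‖) := T.le_opNorm_of_le ih
      _ = ‖T‖ ^ (m + 1) * ‖x‖ := by ring

theorem norm_pow_eq_of_forall_norm_apply_pow_le (T : E →L[𝕜] E) (k : ℕ)
    (hT : ∀ x, ‖T x‖ ^ (k + 2) ≤ ‖T‖ ^ k * ‖T (T x)‖ * ‖x‖ ^ (k + 1)) {m : ℕ} (hm : m ≠ 0) :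
    ‖T ^ m‖ = ‖T‖ ^ m := by
  refine le_antisymm (norm_pow_le' T (Nat.pos_of_ne_zero hm)) ?_
  obtain ⟨m, rfl⟩ := Nat.exists_eq_succ_of_ne_zero hm
  clear hm
  induction m with
  | zero => simp
  | succ m ih =>
    rcases (norm_nonneg T).eq_or_lt with hc | hc
    · rw [← hc, zero_pow (Nat.succ_ne_zero _)]; exact norm_nonneg _
    have hstep : ‖T ^ (m + 1)‖ ^ (k + 2) ≤ ‖T‖ ^ k * ‖T ^ (m + 2)‖ * (‖T‖ ^ m) ^ (k + 1) := by
      refine opNorm_pow_le_of_forall_norm_apply_pow_le _ (by omega) (by positivity) fun x => ?_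
      have hsucc : ∀ j, (T ^ (j + 1)) x = T ((T ^ j) x) := fun j => by rw [pow_succ']; rfl
      calc ‖(T ^ (m + 1)) x‖ ^ (k + 2)
          ≤ ‖T‖ ^ k * ‖(T ^ (m + 2)) x‖ * ‖(T ^ m) x‖ ^ (k + 1) := by
            rw [hsucc, hsucc (m + 1), hsucc]; exact hT _
        _ ≤ ‖T‖ ^ k * (‖T ^ (m + 2)‖ * ‖x‖) * (‖T‖ ^ m * ‖x‖) ^ (k + 1) := by
            gcongr
            · exact le_opNorm _ _
            · exact norm_pow_apply_le _ _ _
        _ = ‖T‖ ^ k * ‖T ^ (m + 2)‖ * (‖T‖ ^ m) ^ (k + 1) * ‖x‖ ^ (k + 2) := by ring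
    have hpos : 0 < ‖T‖ ^ k * (‖T‖ ^ m) ^ (k + 1) := by positivity
    refine le_of_mul_le_mul_left ?_ hpos
    calc ‖T‖ ^ k * (‖T‖ ^ m) ^ (k + 1) * ‖T‖ ^ (m + 2) = (‖T‖ ^ (m + 1)) ^ (k + 2) := by ring
      _ ≤ ‖T ^ (m + 1)‖ ^ (k + 2) := by gcongr
      _ ≤ ‖T‖ ^ k * ‖T ^ (m + 2)‖ * (‖T‖ ^ m) ^ (k + 1) := hstep
      _ = ‖T‖ ^ k * (‖T‖ ^ m) ^ (k + 1) * ‖T ^ (m + 2)‖ := by ring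

theorem norm_apply_eq_of_pow_eq_smul_one (T : E →L[𝕜] E) {n : ℕ} (hn : n ≠ 0) {lam : 𝕜}
    (hT : T ^ n = lam • 1) (hnorm : ‖T ^ n‖ = ‖T‖ ^ n) (x : E) : ‖T x‖ = ‖T‖ * ‖x‖ := by
  refine le_antisymm (T.le_opNorm x) ?_
  rcases (norm_nonneg T).eq_or_lt with hc | hc
  · rw [← hc, zero_mul]; exact norm_nonneg _
  have hlam : ‖T‖ ^ n ≤ ‖lam‖ := by
    calc ‖T‖ ^ n = ‖lam • (1 : E →L[𝕜] E)‖ := by rw [← hnorm, hT]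
      _ ≤ ‖lam‖ * ‖(1 : E →L[𝕜] E)‖ := norm_smul_le _ _
      _ ≤ ‖lam‖ := mul_le_of_le_one_right (norm_nonneg _) norm_id_le
  refine le_of_mul_le_mul_left ?_ (pow_pos hc (n - 1))
  calc ‖T‖ ^ (n - 1) * (‖T‖ * ‖x‖) = ‖T‖ ^ n * ‖x‖ := by
        rw [← mul_assoc, pow_sub_one_mul hn]
    _ ≤ ‖lam‖ * ‖x‖ := by gcongr
    _ = ‖(T ^ (n - 1)) (T x)‖ := by
        change _ = ‖(T ^ (n - 1) * T) x‖
        rw [pow_sub_one_mul hn, hT, smul_apply, one_apply_eq_self, norm_smul]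
    _ ≤ ‖T‖ ^ (n - 1) * ‖T x‖ := norm_pow_apply_le T _ _

end Normed

section InnerProduct

variable {𝕜 E : Type*} [RCLike 𝕜] [NormedAddCommGroup E] [InnerProductSpace 𝕜 E] [CompleteSpace E]

theorem norm_apply_eq_of_mul_self_eq_adjoint_mul {R T : E →L[𝕜] E} (hR : IsSelfAdjoint R)
    (hRT : R * R = adjoint T * T) (x : E) : ‖R x‖ = ‖T x‖ := by
  have hsq : ‖R x‖ ^ 2 = ‖T x‖ ^ 2 := by
    rw [apply_norm_sq_eq_inner_adjoint_left, apply_norm_sq_eq_inner_adjoint_left, hR.adjoint_eq]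
    exact congrArg (fun S : E →L[𝕜] E => RCLike.re (inner 𝕜 (S x) x)) hRT
  exact (pow_left_inj₀ (norm_nonneg _) (norm_nonneg _) two_ne_zero).mp hsq

theorem norm_apply_pow_le_of_absolute_paranormal {R T : E →L[𝕜] E} (hR : IsSelfAdjoint R)
    (hRT : R * R = adjoint T * T) {k : ℕ}
    (habs : ∀ x, ‖T x‖ ^ (k + 2) ≤ ‖(R ^ (k + 1)) (T x)‖ * ‖x‖ ^ (k + 1)) (x : E) :
    ‖T x‖ ^ (k + 2) ≤ ‖T‖ ^ k * ‖T (T x)‖ * ‖x‖ ^ (k + 1) := by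
  have hnorm := norm_apply_eq_of_mul_self_eq_adjoint_mul hR hRT
  have hopNorm : ‖R‖ = ‖T‖ := le_antisymm
    (opNorm_le_bound _ (norm_nonneg _) fun y => (hnorm y).trans_le (T.le_opNorm y))
    (opNorm_le_bound _ (norm_nonneg _) fun y => (hnorm y).symm.trans_le (R.le_opNorm y))
  calc ‖T x‖ ^ (k + 2) ≤ ‖(R ^ k) (R (T x))‖ * ‖x‖ ^ (k + 1) := by
        rw [pow_succ] at habs; exact habs x
    _ ≤ ‖T‖ ^ k * ‖T (T x)‖ * ‖x‖ ^ (k + 1) := by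
      gcongr
      calc ‖(R ^ k) (R (T x))‖ ≤ ‖R‖ ^ k * ‖R (T x)‖ := norm_pow_apply_le R k _
        _ = ‖T‖ ^ k * ‖T (T x)‖ := by rw [hopNorm, hnorm]

theorem adjoint_mul_self_eq_of_norm_apply_eq_mul (T : E →L[𝕜] E) (c : ℝ)
    (hT : ∀ x, ‖T x‖ = c * ‖x‖) : adjoint T * T = ((c ^ 2 : ℝ) : 𝕜) • 1 := by
  rw [← sub_eq_zero, ← coe_inj, toLinearMap_zero]
  have hsymm : IsSelfAdjoint (adjoint T * T - ((c ^ 2 : ℝ) : 𝕜) • 1 : E →L[𝕜] E) :=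
    (IsSelfAdjoint.star_mul_self T).sub (.smul (by simp [isSelfAdjoint_iff]) (.one _))
  refine (isSelfAdjoint_iff_isSymmetric.mp hsymm).inner_map_self_eq_zero.mp fun x => ?_
  simp [inner_sub_left, inner_smul_left, adjoint_inner_left, hT, mul_pow]

end InnerProduct

end ContinuousLinearMap

theorem IsUnit.mul_eq_smul_one_of_mul_eq_smul_one {R A : Type*} [CommSemiring R] [Semiring A]
    [Algebra R A] {a b : A} (ha : IsUnit a) {r : R} (h : b * a = r • 1) : a * b = r • 1 := by
  obtain ⟨u, rfl⟩ := ha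
  calc (u : A) * b = u * (b * u) * ↑u⁻¹ := by simp [mul_assoc]
    _ = r • 1 := by rw [h, mul_smul_one, smul_mul_assoc, Units.mul_inv]

theorem stmt_8 {H : Type*} [NormedAddCommGroup H] [InnerProductSpace ℂ H] [CompleteSpace H]
    (T R : H →L[ℂ] H) (hR : R.IsPositive)
    (hR2 : R * R = ContinuousLinearMap.adjoint T * T)
    (k : ℕ) (hk : 1 ≤ k)
    (habs : ∀ x : H, ‖T x‖ ^ (k + 1) ≤ ‖(R ^ k) (T x)‖ * ‖x‖ ^ k)
    (n : ℕ) (hn : 1 ≤ n) (lam : ℂ) (hT : T ^ n = lam • (1 : H →L[ℂ] H)) :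
    ContinuousLinearMap.adjoint T * T = T * ContinuousLinearMap.adjoint T := by
  obtain ⟨j, rfl⟩ := Nat.exists_eq_add_of_le' hk
  have hn0 : n ≠ 0 := Nat.one_le_iff_ne_zero.mp hn
  have hnormaloid : ‖T ^ n‖ = ‖T‖ ^ n := T.norm_pow_eq_of_forall_norm_apply_pow_le j
    (ContinuousLinearMap.norm_apply_pow_le_of_absolute_paranormal hR.isSelfAdjoint hR2 habs) hn0
  have hTT := T.adjoint_mul_self_eq_of_norm_apply_eq_mul ‖T‖
    (T.norm_apply_eq_of_pow_eq_smul_one hn0 hT hnormaloid)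
  rcases eq_or_ne lam 0 with rfl | hlam
  · have hT0 : T = 0 := by
      rw [hT, zero_smul, norm_zero, eq_comm, pow_eq_zero_iff hn0] at hnormaloid
      exact norm_eq_zero.mp hnormaloid
    simp [hT0]
  have hunit : IsUnit T := by
    rw [← isUnit_pow_iff hn0, hT, ← Algebra.algebraMap_eq_smul_one]
    exact hlam.isUnit.map _
  rw [hTT, hunit.mul_eq_smul_one_of_mul_eq_smul_one hTT]
end

section
/- If T is a paranormal operator, then for every unit vector x the sequence ‖T^n x‖^{1/n} is monotone nondecreasing in n; in particular ‖Tx‖ ≤ ‖T^n x‖^{1/n} for all n ≥ 1. -/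
/-!
Paranormality applied to `Tⁿx` makes `aₙ = ‖Tⁿx‖` log-convex: `aₙ₊₁² ≤ aₙ₊₂ aₙ`. Together with
`a₀ = 1` this gives `aₙⁿ⁺¹ ≤ aₙ₊₁ⁿ` by induction, i.e. `aₙ^(1/n) ≤ aₙ₊₁^(1/(n+1))`.
-/

theorem norm_pow_succ_apply_sq_le {𝕜 E : Type*} [NontriviallyNormedField 𝕜]
    [NormedAddCommGroup E] [NormedSpace 𝕜 E] {T : E →L[𝕜] E}
    (hpara : ∀ y : E, ‖T y‖ ^ 2 ≤ ‖(T ^ 2) y‖ * ‖y‖) (x : E) (n : ℕ) :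
    ‖(T ^ (n + 1)) x‖ ^ 2 ≤ ‖(T ^ (n + 2)) x‖ * ‖(T ^ n) x‖ := by
  have hsucc : (T ^ (n + 1)) x = T ((T ^ n) x) := by rw [pow_succ']; rfl
  have hsucc_succ : (T ^ (n + 2)) x = (T ^ 2) ((T ^ n) x) := by rw [add_comm, pow_add]; rfl
  simpa only [hsucc, hsucc_succ] using hpara ((T ^ n) x)

theorem pow_succ_le_pow_of_sq_le_mul {a : ℕ → ℝ} (ha : ∀ n, 0 ≤ a n) (h0 : a 0 ≤ 1)
    (hlog : ∀ n, a (n + 1) ^ 2 ≤ a (n + 2) * a n) (n : ℕ) :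
    a n ^ (n + 1) ≤ a (n + 1) ^ n := by
  induction n with
  | zero => simpa using h0
  | succ n ih =>
    rcases (ha (n + 1)).eq_or_lt with hzero | hpos
    · rw [← hzero, zero_pow (by omega)]
      exact pow_nonneg (ha _) _
    · refine le_of_mul_le_mul_left ?_ (pow_pos hpos n)
      calc a (n + 1) ^ n * a (n + 1) ^ (n + 2) = (a (n + 1) ^ 2) ^ (n + 1) := by ring
        _ ≤ (a (n + 2) * a n) ^ (n + 1) := pow_le_pow_left₀ (sq_nonneg _) (hlog n) _
        _ = a (n + 2) ^ (n + 1) * a n ^ (n + 1) := mul_pow ..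
        _ ≤ a (n + 2) ^ (n + 1) * a (n + 1) ^ n :=
          mul_le_mul_of_nonneg_left ih (pow_nonneg (ha _) _)
        _ = a (n + 1) ^ n * a (n + 1 + 1) ^ (n + 1) := mul_comm ..

theorem Real.one_div_rpow_le_of_pow_le {u v : ℝ} (hu : 0 ≤ u) (hv : 0 ≤ v) {m n : ℕ}
    (hm : m ≠ 0) (hn : n ≠ 0) (h : u ^ n ≤ v ^ m) :
    u ^ ((1 : ℝ) / m) ≤ v ^ ((1 : ℝ) / n) := by
  refine le_of_pow_le_pow_left₀ (mul_ne_zero hm hn) (by positivity) ?_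
  rwa [one_div, one_div, pow_mul, Real.rpow_inv_natCast_pow hu hm, mul_comm, pow_mul,
    Real.rpow_inv_natCast_pow hv hn]

theorem stmt_14_general {H : Type*} [NormedAddCommGroup H] [InnerProductSpace ℂ H]
    (T : H →L[ℂ] H)
    (hpara : ∀ y : H, ‖T y‖ ^ 2 ≤ ‖(T ^ 2) y‖ * ‖y‖)
    (x : H) (hx : ‖x‖ = 1) :
    (∀ n : ℕ, 1 ≤ n →
        ‖(T ^ n) x‖ ^ ((1 : ℝ) / n) ≤ ‖(T ^ (n + 1)) x‖ ^ ((1 : ℝ) / (n + 1))) ∧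
      (∀ n : ℕ, 1 ≤ n → ‖T x‖ ≤ ‖(T ^ n) x‖ ^ ((1 : ℝ) / n)) := by
  have step (n : ℕ) (hn : 1 ≤ n) :
      ‖(T ^ n) x‖ ^ ((1 : ℝ) / n) ≤ ‖(T ^ (n + 1)) x‖ ^ ((1 : ℝ) / (n + 1)) := by
    have hpow := pow_succ_le_pow_of_sq_le_mul (a := fun n ↦ ‖(T ^ n) x‖) (fun _ ↦ norm_nonneg _)
      (by simp [hx]) (norm_pow_succ_apply_sq_le hpara x) n
    exact_mod_cast Real.one_div_rpow_le_of_pow_le (norm_nonneg _) (norm_nonneg _)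
      (by omega) n.succ_ne_zero hpow
  refine ⟨step, fun n hn ↦ ?_⟩
  induction n, hn using Nat.le_induction with
  | base => simp
  | succ n hn ih => exact ih.trans (by exact_mod_cast step n hn)

theorem stmt_14 {H : Type*} [NormedAddCommGroup H] [InnerProductSpace ℂ H] [CompleteSpace H]
    (T : H →L[ℂ] H)
    (hpara : ∀ y : H, ‖T y‖ ^ 2 ≤ ‖(T ^ 2) y‖ * ‖y‖)
    (x : H) (hx : ‖x‖ = 1) :
    (∀ n : ℕ, 1 ≤ n →
        ‖(T ^ n) x‖ ^ ((1 : ℝ) / n) ≤ ‖(T ^ (n + 1)) x‖ ^ ((1 : ℝ) / (n + 1))) ∧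
      (∀ n : ℕ, 1 ≤ n → ‖T x‖ ≤ ‖(T ^ n) x‖ ^ ((1 : ℝ) / n)) :=
  stmt_14_general T hpara x hx
end

section
/- If T is a right-invertible paranormal operator (that is, a paranormal operator with a right inverse), and T^n is quasinormal for some n ≥ 1, then T^n is normal. -/
theorem stmt_15 {H : Type*} [NormedAddCommGroup H] [InnerProductSpace ℂ H] [CompleteSpace H]
    (T S : H →L[ℂ] H) (hS : T * S = 1)
    (hpara : ∀ x : H, ‖T x‖ ^ 2 ≤ ‖(T ^ 2) x‖ * ‖x‖)
    (n : ℕ) (hn : 1 ≤ n)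
    (hq : T ^ n * (ContinuousLinearMap.adjoint (T ^ n) * T ^ n)
        = (ContinuousLinearMap.adjoint (T ^ n) * T ^ n) * T ^ n) :
    ContinuousLinearMap.adjoint (T ^ n) * T ^ n = T ^ n * ContinuousLinearMap.adjoint (T ^ n) := by
  have hTS : ∀ m : ℕ, T ^ m * S ^ m = 1 := by
    intro m
    induction m with
    | zero => simp
    | succ k ih =>
      rw [pow_succ, pow_succ', mul_assoc, ← mul_assoc T S (S ^ k), hS, one_mul, ih]
  have hsurj : ∀ y : H, ∃ x, (T ^ n) x = y := by
    intro y
    refine ⟨(S ^ n) y, ?_⟩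
    have := congrArg (fun f : H →L[ℂ] H => f y) (hTS n)
    simpa using this
  ext y
  obtain ⟨x, rfl⟩ := hsurj y
  have := congrArg (fun f : H →L[ℂ] H => f x) hq
  simpa using this.symm
end

section
/- If M, N are nonzero bounded operators with M normal, N² = 0, and ‖N‖ ≤ ‖M‖, then T = M ⊕ N is normaloid (‖T^n‖ = ‖T‖^n for all n ≥ 1), T^n is normal for all n ≥ 2, but T is not normal. -/
/-!
For a normal element of a C⋆-algebra the norm equals the spectral radius `r`, and
`r(a) ^ n ≤ r(a ^ n) ≤ ‖a ^ n‖`; hence `‖M ^ n‖ = ‖M‖ ^ n`. Since `T ^ n = M ^ n ⊕ N ^ n`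
has norm `max ‖M ^ n‖ ‖N ^ n‖` and `‖N ^ n‖ ≤ ‖N‖ ^ n ≤ ‖M‖ ^ n`, `T` is normaloid. For `n ≥ 2`
we have `N ^ n = 0`, so `T ^ n = M ^ n ⊕ 0` is normal, while normality of `T` would make `N`
a normal nilpotent, hence zero.
-/

open ContinuousLinearMap WithLp

instance IsStarNormal.pow {R : Type*} [Monoid R] [StarMul R] (a : R) [IsStarNormal a] (n : ℕ) :
    IsStarNormal (a ^ n) :=
  ⟨by rw [star_pow]; exact ((isStarNormal_iff a).mp ‹_›).pow_pow n n⟩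

section CStarAlgebra

variable {A : Type*} [CStarAlgebra A]

lemma IsStarNormal.nnnorm_pow (a : A) [IsStarNormal a] {n : ℕ} (hn : n ≠ 0) :
    ‖a ^ n‖₊ = ‖a‖₊ ^ n := by
  cases subsingleton_or_nontrivial A
  · simp [Subsingleton.elim a 0, hn]
  refine le_antisymm (nnnorm_pow_le' a (Nat.pos_of_ne_zero hn)) ?_
  have : ((‖a‖₊ ^ n : NNReal) : ENNReal) ≤ ‖a ^ n‖₊ := calc
    ((‖a‖₊ ^ n : NNReal) : ENNReal) = spectralRadius ℂ a ^ n := by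
      rw [IsStarNormal.spectralRadius_eq_nnnorm, ENNReal.coe_pow]
    _ ≤ spectralRadius ℂ (a ^ n) := spectrum.spectralRadius_pow_le a n hn
    _ ≤ ‖a ^ n‖₊ := spectrum.spectralRadius_le_nnnorm (a ^ n)
  exact_mod_cast this

lemma IsStarNormal.norm_pow (a : A) [IsStarNormal a] {n : ℕ} (hn : n ≠ 0) :
    ‖a ^ n‖ = ‖a‖ ^ n :=
  congr($(IsStarNormal.nnnorm_pow a hn))

lemma IsStarNormal.eq_zero_of_pow_eq_zero {a : A} [IsStarNormal a] {n : ℕ} (hn : n ≠ 0)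
    (h : a ^ n = 0) : a = 0 := by
  have : ‖a‖ ^ n = 0 := by rw [← IsStarNormal.norm_pow a hn, h, norm_zero]
  exact norm_eq_zero.mp (pow_eq_zero_iff hn |>.mp this)

end CStarAlgebra

namespace ContinuousLinearMap

section Normed

variable {𝕜 E E' F F' : Type*} [RCLike 𝕜]
  [NormedAddCommGroup E] [NormedSpace 𝕜 E] [NormedAddCommGroup E'] [NormedSpace 𝕜 E']
  [NormedAddCommGroup F] [NormedSpace 𝕜 F] [NormedAddCommGroup F'] [NormedSpace 𝕜 F']
  (p : ENNReal)

def withLpProdMap (A : E →L[𝕜] E') (B : F →L[𝕜] F') :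
    WithLp p (E × F) →L[𝕜] WithLp p (E' × F') :=
  (prodContinuousLinearEquiv p 𝕜 E' F').symm.toContinuousLinearMap ∘L A.prodMap B ∘L
    (prodContinuousLinearEquiv p 𝕜 E F).toContinuousLinearMap

variable {p}

@[simp]
lemma withLpProdMap_apply (A : E →L[𝕜] E') (B : F →L[𝕜] F') (x : WithLp p (E × F)) :
    withLpProdMap p A B x = toLp p (A x.fst, B x.snd) :=
  rfl

lemma withLpProdMap_inj {A A' : E →L[𝕜] E'} {B B' : F →L[𝕜] F'} :
    withLpProdMap p A B = withLpProdMap p A' B' ↔ A = A' ∧ B = B' := by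
  refine ⟨fun h ↦ ⟨?_, ?_⟩, fun ⟨hA, hB⟩ ↦ hA ▸ hB ▸ rfl⟩ <;> ext x
  · simpa using congr(($h (toLp p (x, 0))).fst)
  · simpa using congr(($h (toLp p (0, x))).snd)

lemma withLpProdMap_mul (A A' : E →L[𝕜] E) (B B' : F →L[𝕜] F) :
    withLpProdMap p A B * withLpProdMap p A' B' = withLpProdMap p (A * A') (B * B') :=
  rfl

lemma withLpProdMap_pow (A : E →L[𝕜] E) (B : F →L[𝕜] F) (n : ℕ) :
    withLpProdMap p A B ^ n = withLpProdMap p (A ^ n) (B ^ n) := by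
  induction n with
  | zero => rfl
  | succ n ih => rw [pow_succ, ih, withLpProdMap_mul, pow_succ, pow_succ]

lemma norm_withLpProdMap (A : E →L[𝕜] E') (B : F →L[𝕜] F') :
    ‖withLpProdMap 2 A B‖ = max ‖A‖ ‖B‖ := by
  refine le_antisymm (opNorm_le_bound _ (by positivity) fun x ↦ ?_) (max_le ?_ ?_)
  · refine (pow_le_pow_iff_left₀ (norm_nonneg _) (by positivity) two_ne_zero).mp ?_
    rw [mul_pow, prod_norm_sq_eq_of_L2, prod_norm_sq_eq_of_L2, mul_add, ← mul_pow, ← mul_pow]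
    gcongr
    · exact A.le_of_opNorm_le (le_max_left _ _) _
    · exact B.le_of_opNorm_le (le_max_right _ _) _
  · refine opNorm_le_bound _ (norm_nonneg _) fun x ↦ ?_
    calc ‖A x‖ = ‖(withLpProdMap 2 A B (toLp 2 (x, (0 : F)))).fst‖ := rfl
      _ ≤ ‖withLpProdMap 2 A B (toLp 2 (x, (0 : F)))‖ := WithLp.norm_fst_le _ _
      _ ≤ ‖withLpProdMap 2 A B‖ * ‖x‖ := by
        simpa only [norm_toLp_fst] using le_opNorm (withLpProdMap 2 A B) (toLp 2 (x, 0))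
  · refine opNorm_le_bound _ (norm_nonneg _) fun y ↦ ?_
    calc ‖B y‖ = ‖(withLpProdMap 2 A B (toLp 2 ((0 : E), y))).snd‖ := rfl
      _ ≤ ‖withLpProdMap 2 A B (toLp 2 ((0 : E), y))‖ := WithLp.norm_snd_le _ _
      _ ≤ ‖withLpProdMap 2 A B‖ * ‖y‖ := by
        simpa only [norm_toLp_snd] using le_opNorm (withLpProdMap 2 A B) (toLp 2 (0, y))

end Normed

section InnerProduct

variable {𝕜 E E' F F' : Type*} [RCLike 𝕜]
  [NormedAddCommGroup E] [InnerProductSpace 𝕜 E] [CompleteSpace E]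
  [NormedAddCommGroup E'] [InnerProductSpace 𝕜 E'] [CompleteSpace E']
  [NormedAddCommGroup F] [InnerProductSpace 𝕜 F] [CompleteSpace F]
  [NormedAddCommGroup F'] [InnerProductSpace 𝕜 F'] [CompleteSpace F']

lemma adjoint_withLpProdMap (A : E →L[𝕜] E') (B : F →L[𝕜] F') :
    adjoint (withLpProdMap 2 A B) = withLpProdMap 2 (adjoint A) (adjoint B) := by
  refine ((eq_adjoint_iff _ _).mpr fun x y ↦ ?_).symm
  simp [prod_inner_apply, adjoint_inner_left]

lemma isStarNormal_withLpProdMap_iff {A : E →L[𝕜] E} {B : F →L[𝕜] F} :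
    IsStarNormal (withLpProdMap 2 A B) ↔ IsStarNormal A ∧ IsStarNormal B := by
  simp only [isStarNormal_iff, commute_iff_eq, star_eq_adjoint, adjoint_withLpProdMap,
    withLpProdMap_mul, withLpProdMap_inj]

end InnerProduct

end ContinuousLinearMap

theorem stmt_18_general {H : Type*} [NormedAddCommGroup H] [InnerProductSpace ℂ H] [CompleteSpace H]
    (M N : H →L[ℂ] H) (hN0 : N ≠ 0)
    (hM : ContinuousLinearMap.adjoint M * M = M * ContinuousLinearMap.adjoint M)
    (hN : N ^ 2 = 0) (hMN : ‖N‖ ≤ ‖M‖)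
    (T : WithLp 2 (H × H) →L[ℂ] WithLp 2 (H × H))
    (hT : ∀ p : WithLp 2 (H × H),
      WithLp.equiv 2 (H × H) (T p) =
        (M (WithLp.equiv 2 (H × H) p).1, N (WithLp.equiv 2 (H × H) p).2)) :
    (∀ n : ℕ, 1 ≤ n → ‖T ^ n‖ = ‖T‖ ^ n) ∧
      (∀ n : ℕ, 2 ≤ n →
        ContinuousLinearMap.adjoint (T ^ n) * T ^ n = T ^ n * ContinuousLinearMap.adjoint (T ^ n)) ∧
      ContinuousLinearMap.adjoint T * T ≠ T * ContinuousLinearMap.adjoint T := by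
  have hT_eq : T = withLpProdMap 2 M N := ext fun p ↦ congr(WithLp.toLp 2 $(hT p))
  have : IsStarNormal M := ⟨hM⟩
  have hN_pow {n : ℕ} (hn : 2 ≤ n) : N ^ n = 0 := by
    rw [← Nat.add_sub_cancel' hn, pow_add, hN, zero_mul]
  subst hT_eq
  refine ⟨fun n hn ↦ ?_, fun n hn ↦ ?_, fun hT_normal ↦ hN0 ?_⟩
  · have hNM : ‖N ^ n‖ ≤ ‖M ^ n‖ := calc
      ‖N ^ n‖ ≤ ‖N‖ ^ n := norm_pow_le' N hn
      _ ≤ ‖M‖ ^ n := by gcongr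
      _ = ‖M ^ n‖ := (IsStarNormal.norm_pow M (by omega)).symm
    rw [withLpProdMap_pow, norm_withLpProdMap, norm_withLpProdMap, max_eq_left hNM,
      max_eq_left hMN, IsStarNormal.norm_pow M (by omega)]
  · have : IsStarNormal (withLpProdMap 2 M N ^ n) := by
      rw [withLpProdMap_pow, hN_pow hn, isStarNormal_withLpProdMap_iff]
      exact ⟨inferInstance, .zero⟩
    exact this.star_comm_self
  · have : IsStarNormal N := (isStarNormal_withLpProdMap_iff.mp ⟨hT_normal⟩).2
    exact IsStarNormal.eq_zero_of_pow_eq_zero two_ne_zero hN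

theorem stmt_18 {H : Type*} [NormedAddCommGroup H] [InnerProductSpace ℂ H] [CompleteSpace H]
    (M N : H →L[ℂ] H) (hM0 : M ≠ 0) (hN0 : N ≠ 0)
    (hM : ContinuousLinearMap.adjoint M * M = M * ContinuousLinearMap.adjoint M)
    (hN : N ^ 2 = 0) (hMN : ‖N‖ ≤ ‖M‖)
    (T : WithLp 2 (H × H) →L[ℂ] WithLp 2 (H × H))
    (hT : ∀ p : WithLp 2 (H × H),
      WithLp.equiv 2 (H × H) (T p) =
        (M (WithLp.equiv 2 (H × H) p).1, N (WithLp.equiv 2 (H × H) p).2)) :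
    (∀ n : ℕ, 1 ≤ n → ‖T ^ n‖ = ‖T‖ ^ n) ∧
      (∀ n : ℕ, 2 ≤ n →
        ContinuousLinearMap.adjoint (T ^ n) * T ^ n = T ^ n * ContinuousLinearMap.adjoint (T ^ n)) ∧
      ContinuousLinearMap.adjoint T * T ≠ T * ContinuousLinearMap.adjoint T :=
  stmt_18_general M N hN0 hM hN hMN T hT
end

section
/- If T is quasinormal and T^n is normal for some n ≥ 2, then the kernel of T* is contained in the kernel of T. -/
/-!
Let `S = T† T`. Quasinormality gives `(T†)ⁿ Tⁿ = Sⁿ`, so `ker Tⁿ = ker Sⁿ`, and since `S` is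
self-adjoint its kernel does not grow under powers; hence `ker Tⁿ = ker T`. If `T† x = 0` then
`(Tⁿ)† x = (T†)ⁿ x = 0`, and normality of `Tⁿ` turns this into `Tⁿ x = 0`, i.e. `T x = 0`.
-/

theorem pow_mul_pow_eq_mul_pow_of_commute {M : Type*} [Monoid M] {a b : M}
    (h : Commute a (b * a)) (k : ℕ) : b ^ k * a ^ k = (b * a) ^ k := by
  induction k with
  | zero => simp
  | succ k ih =>
    calc b ^ (k + 1) * a ^ (k + 1) = b ^ k * (b * a * a ^ k) := by
          rw [pow_succ, pow_succ', mul_assoc, mul_assoc]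
      _ = b ^ k * a ^ k * (b * a) := by rw [((h.pow_left k).eq).symm, mul_assoc]
      _ = (b * a) ^ (k + 1) := by rw [ih, pow_succ]

namespace ContinuousLinearMap

variable {𝕜 E : Type*} [RCLike 𝕜] [NormedAddCommGroup E] [InnerProductSpace 𝕜 E] [CompleteSpace E]

theorem _root_.IsSelfAdjoint.ker_pow_eq_ker {S : E →L[𝕜] E} (hS : IsSelfAdjoint S) {k : ℕ}
    (hk : k ≠ 0) : (S ^ k).ker = S.ker := by
  induction k with
  | zero => exact absurd rfl hk
  | succ k ih =>
    rcases Nat.eq_zero_or_pos k with rfl | hk_pos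
    · simp
    refine le_antisymm ?_ (by rw [pow_succ]; exact LinearMap.ker_le_ker_comp _ _)
    calc (S ^ (k + 1)).ker ≤ (S ^ (k - 1) * S ^ (k + 1)).ker := LinearMap.ker_le_ker_comp _ _
      _ = (adjoint (S ^ k) ∘L S ^ k).ker := by
          rw [(hS.pow k).adjoint_eq, ← pow_add, ← mul_def, ← pow_add,
            show k - 1 + (k + 1) = k + k by omega]
      _ = S.ker := by rw [ker_adjoint_comp_self, ih hk_pos.ne']

def IsQuasinormal (T : E →L[𝕜] E) : Prop :=
  Commute T (adjoint T * T)

theorem IsQuasinormal.ker_pow_eq_ker {T : E →L[𝕜] E} (hT : IsQuasinormal T) {n : ℕ}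
    (hn : n ≠ 0) : (T ^ n).ker = T.ker :=
  calc (T ^ n).ker = (adjoint (T ^ n) ∘L T ^ n).ker := (ker_adjoint_comp_self _).symm
    _ = ((adjoint T * T) ^ n).ker := by
        rw [← star_eq_adjoint, star_pow, star_eq_adjoint, ← mul_def,
          pow_mul_pow_eq_mul_pow_of_commute hT]
    _ = T.ker := by
        rw [← star_eq_adjoint, (IsSelfAdjoint.star_mul_self T).ker_pow_eq_ker hn,
          star_eq_adjoint]
        exact ker_adjoint_comp_self T

end ContinuousLinearMap

open ContinuousLinearMap

theorem stmt_19 {H : Type*} [NormedAddCommGroup H] [InnerProductSpace ℂ H] [CompleteSpace H]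
    (T : H →L[ℂ] H)
    (hq : T * (ContinuousLinearMap.adjoint T * T) = (ContinuousLinearMap.adjoint T * T) * T)
    (n : ℕ) (hn : 2 ≤ n)
    (hnorm : ContinuousLinearMap.adjoint (T ^ n) * T ^ n = T ^ n * ContinuousLinearMap.adjoint (T ^ n)) :
    LinearMap.ker (ContinuousLinearMap.adjoint T : H →ₗ[ℂ] H) ≤ LinearMap.ker (T : H →ₗ[ℂ] H) := by
  have hn0 : n ≠ 0 := by omega
  have hTn : IsStarNormal (T ^ n) := ⟨hnorm⟩
  intro x (hx : adjoint T x = 0)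
  have hTn_adj : adjoint (T ^ n) x = 0 := by
    obtain ⟨m, rfl⟩ := Nat.exists_eq_succ_of_ne_zero hn0
    rw [← star_eq_adjoint, star_pow, pow_succ, mul_apply_eq_comp, star_eq_adjoint]
    simp [hx]
  have : x ∈ (T ^ n).ker := (hTn.adjoint_apply_eq_zero_iff x).mp hTn_adj
  rwa [IsQuasinormal.ker_pow_eq_ker hq hn0] at this
end
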